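/- Let G and H be rooted graphs and let u, v ∈ V(G) satisfy e_G(u, v) > |E(H)|. Then G has a rooted immersion of H if and only if the graph obtained from G by deleting one copy of the edge uv has a rooted immersion of H. -/

import Mathlib

open scoped Classical

noncomputable section

namespace PaperW4

/-- A finite loopless undirected multigraph on ambient vertex type `V`:
a finite vertex set together with a multiset of (non-loop) edges supported on it. -/
structure MG (V : Type) where
  verts : Finset V
  edges : Multiset (Sym2 V)
  edge_support : ∀ e ∈ edges, ∀ v ∈ e, v ∈ verts
  loopless : ∀ e ∈ edges, ¬ e.IsDiag

variable {V : Type} {W : Type}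

/-- `δ_G(X)`: the edges of `G` with exactly one endpoint in `X`. -/
def cutEdges (G : MG V) (X : Finset V) : Multiset (Sym2 V) :=
  G.edges.filter fun e => ∃ u v, e = s(u, v) ∧ u ∈ X ∧ v ∉ X

/-- `d_G(X) = |δ_G(X)|`. -/
def dcut (G : MG V) (X : Finset V) : ℕ := (cutEdges G X).card

/-- The degree of a vertex: the number of edges incident with it. -/
def deg (G : MG V) (v : V) : ℕ := (G.edges.filter fun e => v ∈ e).card

/-- `e_G(u,v)`: the number of edges joining `u` and `v`. -/
def emult (G : MG V) (u v : V) : ℕ := G.edges.count s(u, v)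

/-- `G` is `k`-edge-connected: every edge-cut `δ(X)` with `∅ ≠ X ⊊ V(G)` has size `≥ k`. -/
def EdgeConn (G : MG V) (k : ℕ) : Prop :=
  ∀ X : Finset V, X ⊆ G.verts → X.Nonempty → X ≠ G.verts → k ≤ dcut G X

/-- `G` is internally `k`-edge-connected: every edge-cut with at least two vertices
on each side has size `≥ k`. -/
def InternallyEdgeConn (G : MG V) (k : ℕ) : Prop :=
  ∀ X : Finset V, X ⊆ G.verts → 2 ≤ X.card → 2 ≤ (G.verts \ X).card → k ≤ dcut G X

/-- Every vertex has degree three. -/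
def Cubic (G : MG V) : Prop := ∀ v ∈ G.verts, deg G v = 3

/-- The multiset of edges traversed by a walk, given as its list of vertices. -/
def walkEdges (l : List V) : Multiset (Sym2 V) :=
  (↑((l.zip l.tail).map fun p => s(p.1, p.2)) : Multiset (Sym2 V))

/-- `l` is (the vertex sequence of) a walk from `u` to `v`. -/
def IsWalk (l : List V) (u v : V) : Prop :=
  l.head? = some u ∧ l.getLast? = some v

/-- `G` is connected: any two of its vertices are joined by a trail in `G`. -/
def Connected (G : MG V) : Prop :=
  ∀ u ∈ G.verts, ∀ v ∈ G.verts,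
    ∃ l : List V, IsWalk l u v ∧ walkEdges l ≤ G.edges ∧ ∀ w ∈ l, w ∈ G.verts

/-- An immersion of the loopless multigraph with vertex type `W` and edge multiset `H`
into `G`, with terminal map `φ`: `φ` is injective, and to each edge `uv` of `H` is
assigned a walk in `G` from `φ u` to `φ v`, these walks being globally edge-disjoint. -/
def ImmersionVia (G : MG V) (H : Multiset (Sym2 W)) (φ : W → V) : Prop :=
  Function.Injective φ ∧ (∀ w : W, φ w ∈ G.verts) ∧
  ∃ P : Multiset (Sym2 W × List V),
    P.map Prod.fst = H ∧
    (∀ p ∈ P, ∃ u v : W, p.1 = s(u, v) ∧ IsWalk p.2 (φ u) (φ v)) ∧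
    (P.map fun p => walkEdges p.2).sum ≤ G.edges

/-- The edges of the wheel `W₄`: vertex `0` is the center, `1,2,3,4` the rim cycle. -/
def w4Edges : Multiset (Sym2 (Fin 5)) :=
  {s(0, 1), s(0, 2), s(0, 3), s(0, 4), s(1, 2), s(2, 3), s(3, 4), s(4, 1)}

/-- `G` has an immersion of `W₄`. -/
def HasW4Immersion (G : MG V) : Prop :=
  ∃ φ : Fin 5 → V, ImmersionVia G w4Edges φ

/-- `G` (rooted at `x`) has a rooted immersion of `W₄`: one in which the
center of `W₄` corresponds to `x`. -/
def HasRootedW4Immersion (G : MG V) (x : V) : Prop :=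
  ∃ φ : Fin 5 → V, φ 0 = x ∧ ImmersionVia G w4Edges φ

/-- The edges of `D_m`: roots are `0, 1`; vertices `2, 3` play the role of `y₀, y₁`;
there are `m - 2` parallel edges between the two roots. -/
def dmEdges (m : ℕ) : Multiset (Sym2 (Fin 4)) :=
  Multiset.replicate (m - 2) s(0, 1) + {s(0, 2), s(0, 3), s(1, 2), s(1, 3), s(2, 3)}

/-- `G` with roots `x0, x1` has a rooted immersion of `D_m`. -/
def HasRootedDmImmersion (G : MG V) (m : ℕ) (x0 x1 : V) : Prop :=
  ∃ φ : Fin 4 → V, φ 0 = x0 ∧ φ 1 = x1 ∧ ImmersionVia G (dmEdges m) φ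

/-- The edges of `K₄`. -/
def k4Edges : Multiset (Sym2 (Fin 4)) :=
  {s(0, 1), s(0, 2), s(0, 3), s(1, 2), s(1, 3), s(2, 3)}

/-- A nested chain of vertex sets `C 0 ⊂ C 1 ⊂ ⋯`, each obtained from the previous
by adding one vertex, all cuts having size exactly `k`. -/
def SegChain (G : MG V) (n : ℕ) (C : Fin (n + 1) → Finset V) (k : ℕ) : Prop :=
  (∀ i, C i ⊆ G.verts) ∧
  (∀ i : Fin n, C i.castSucc ⊆ C i.succ ∧ (C i.succ \ C i.castSucc).card = 1) ∧
  (∀ i, dcut G (C i) = k)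

/-- `G` has a segmentation of width `k` relative to `(X, Y)`. -/
def HasSegmentation (G : MG V) (X Y : Finset V) (k : ℕ) : Prop :=
  ∃ (n : ℕ) (C : Fin (n + 1) → Finset V),
    SegChain G n C k ∧ C 0 = X ∧ G.verts \ C (Fin.last n) = Y

/-- `λ_s(G) ≥ m`: every edge-cut separating `x0` from `x1` has size `≥ m`. -/
def LamSGe (G : MG V) (x0 x1 : V) (m : ℕ) : Prop :=
  ∀ X : Finset V, X ⊆ G.verts → x0 ∈ X → x1 ∉ X → m ≤ dcut G X

/-- `λ_n(G) ≥ m`: every edge-cut not separating `x0` from `x1` has size `≥ m`. -/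
def LamNGe (G : MG V) (x0 x1 : V) (m : ℕ) : Prop :=
  ∀ X : Finset V, X ⊆ G.verts → X.Nonempty → X ≠ G.verts →
    (x0 ∈ X ↔ x1 ∈ X) → m ≤ dcut G X

/-- `λ_n^i(G) ≥ m`: every internal edge-cut not separating `x0` from `x1` has size `≥ m`. -/
def LamNiGe (G : MG V) (x0 x1 : V) (m : ℕ) : Prop :=
  ∀ X : Finset V, X ⊆ G.verts → 2 ≤ X.card → 2 ≤ (G.verts \ X).card →
    (x0 ∈ X ↔ x1 ∈ X) → m ≤ dcut G X

/-- The subgraph of `G` induced on `S`. -/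
def induce (G : MG V) (S : Finset V) : MG V where
  verts := G.verts ∩ S
  edges := G.edges.filter fun e => ∀ v ∈ e, v ∈ S
  edge_support := by
    intro e he v hv
    rw [Multiset.mem_filter] at he
    exact Finset.mem_inter.mpr ⟨G.edge_support e he.1 v hv, he.2 v hv⟩
  loopless := fun e he => G.loopless e (Multiset.mem_of_mem_filter he)

/-- `G` with the vertices of `S` (and all incident edges) deleted. -/
def deleteVerts (G : MG V) (S : Finset V) : MG V := induce G (G.verts \ S)

/-- `C` is (the vertex set of) a connected component of `G`. -/
def IsComponent (G : MG V) (C : Finset V) : Prop :=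
  C ⊆ G.verts ∧ C.Nonempty ∧ Connected (induce G C) ∧
  ∀ e ∈ G.edges, (∃ v ∈ e, v ∈ C) → ∀ v ∈ e, v ∈ C

/-- `G` has type `A_m` with respect to roots `x0, x1`. -/
def TypeA (G : MG V) (m : ℕ) (x0 x1 : V) : Prop :=
  ∃ X0 X1 : Finset V, x0 ∈ X0 ∧ x1 ∈ X1 ∧ X0.card ≤ 2 ∧ X1.card ≤ 2 ∧
    HasSegmentation G X0 X1 m

/-- The edges of the lobe of `G` (with roots `x0, x1`) corresponding to the
component `C` of `G ∖ {x0, x1}`: edges inside `C ∪ {x0, x1}` other than `x0x1`-edges. -/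
def lobeEdges (G : MG V) (C : Finset V) (x0 x1 : V) : Multiset (Sym2 V) :=
  G.edges.filter fun e => (∀ v ∈ e, v ∈ insert x0 (insert x1 C)) ∧ e ≠ s(x0, x1)

/-- `G` has type `B_m` with respect to roots `x0, x1`. -/
def TypeB (G : MG V) (m : ℕ) (x0 x1 : V) : Prop :=
  ∃ (k : ℕ) (C : Fin k → Finset V) (nL : Fin k → ℕ),
    Function.Injective C ∧
    (∀ D : Finset V, IsComponent (deleteVerts G {x0, x1}) D ↔ ∃ i, C i = D) ∧
    (∀ i : Fin k, 2 ≤ nL i ∧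
      ∃ l : List V, l.Nodup ∧ IsWalk l x0 x1 ∧
        l.toFinset = insert x0 (insert x1 (C i)) ∧
        (2 ≤ (C i).card → nL i = 2) ∧
        lobeEdges G (C i) x0 x1 = nL i • walkEdges l) ∧
    emult G x0 x1 + ∑ i, nL i = m + 1

/-- The edge multiset of a cycle of length `n` on the vertices `f 0, f 1, …`. -/
def cycleEdges (n : ℕ) (f : Fin n → V) : Multiset (Sym2 V) :=
  (Finset.univ.val : Multiset (Fin n)).map fun i =>
    s(f i, f ⟨(i.val + 1) % n, Nat.mod_lt _ i.pos⟩)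

/-- `G` is a doubled cycle of length `n`. -/
def IsDoubledCycleLen (G : MG V) (n : ℕ) : Prop :=
  ∃ f : Fin n → V, Function.Injective f ∧ Finset.univ.image f = G.verts ∧
    G.edges = 2 • cycleEdges n f

/-- `G` is a doubled cycle. -/
def IsDoubledCycle (G : MG V) : Prop := ∃ n, 3 ≤ n ∧ IsDoubledCycleLen G n

/-- The map collapsing all of `Y` to the vertex `y0` and fixing everything else. -/
def collapseFun (Y : Finset V) (y0 : V) : V → V := fun v => if v ∈ Y then y0 else v

/-- The image multigraph of `G` under a vertex map `f` (identification of vertices),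
with any created loops deleted. -/
def mapGraph (f : V → V) (G : MG V) : MG V where
  verts := G.verts.image f
  edges := (G.edges.map (Sym2.map f)).filter fun e => ¬e.IsDiag
  edge_support := by
    intro e he v hv
    rw [Multiset.mem_filter] at he
    obtain ⟨he, -⟩ := he
    rw [Multiset.mem_map] at he
    obtain ⟨e', he', rfl⟩ := he
    rw [Sym2.mem_map] at hv
    obtain ⟨u, hu, rfl⟩ := hv
    exact Finset.mem_image_of_mem f (G.edge_support e' he' u hu)
  loopless := by
    intro e he
    rw [Multiset.mem_filter] at he
    exact he.2

/-- `G[X]` is a chain of sausages of order `k` in `G`: identifying `V(G) ∖ X` to a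
single vertex yields a doubled cycle of length `k + 1`. -/
def ChainOfSausages (G : MG V) (X : Finset V) (k : ℕ) : Prop :=
  X ⊆ G.verts ∧ X.card = k ∧ 2 ≤ k ∧
  ∃ y0 ∈ G.verts \ X,
    IsDoubledCycleLen (mapGraph (collapseFun (G.verts \ X) y0) G) (k + 1)

/-- `G` is sausage reduced: it has no chain of sausages of order at least `3`. -/
def SausageReduced (G : MG V) : Prop :=
  ¬ ∃ (X : Finset V) (k : ℕ), 3 ≤ k ∧ ChainOfSausages G X k

/-- One sausage shortening step of a rooted graph: two adjacent vertices of a chain of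
sausages of order at least three are identified, carrying the root along. -/
def RootedShortStep (p q : MG V × V) : Prop :=
  ∃ (X : Finset V) (k : ℕ) (a b : V),
    3 ≤ k ∧ ChainOfSausages p.1 X k ∧ a ∈ X ∧ b ∈ X ∧ a ≠ b ∧ s(a, b) ∈ p.1.edges ∧
    q.1 = mapGraph (fun v => if v = b then a else v) p.1 ∧
    q.2 = (if p.2 = b then a else p.2)

/-- Deleting a single copy of the edge `e` from `G`. -/
def deleteEdge (G : MG V) (e : Sym2 V) : MG V where
  verts := G.verts
  edges := G.edges.erase e
  edge_support := fun e' he' => G.edge_support e' (Multiset.mem_of_mem_erase he')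
  loopless := fun e' he' => G.loopless e' (Multiset.mem_of_mem_erase he')

/-- `G` has a tree-decomposition of width at most `k`. -/
def HasTreeDecomp (G : MG V) (k : ℕ) : Prop :=
  ∃ (ι : Type) (T : SimpleGraph ι) (B : ι → Finset V),
    T.IsTree ∧
    (∀ t, B t ⊆ G.verts) ∧
    (∀ v ∈ G.verts, ∃ t, v ∈ B t) ∧
    (∀ e ∈ G.edges, ∃ t, ∀ v ∈ e, v ∈ B t) ∧
    (∀ v ∈ G.verts, (SimpleGraph.induce {t | v ∈ B t} T).Connected) ∧
    ∀ t, (B t).card ≤ k + 1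

/-- The tree-width of `G`. -/
def treewidth (G : MG V) : ℕ := sInf { k | HasTreeDecomp G k }

/-- One subdivision step: an edge `uv` is replaced by a path `u - w - v`
through a new vertex `w`. -/
def SubdivStep (G H : MG V) : Prop :=
  ∃ u v w : V, s(u, v) ∈ G.edges ∧ w ∉ G.verts ∧
    H.verts = insert w G.verts ∧
    H.edges = (G.edges.erase s(u, v)) + {s(u, w), s(w, v)}

/-- `H` is a subdivision of `G`. -/
def IsSubdivision (G H : MG V) : Prop := Relation.ReflTransGen SubdivStep G H

/-- `G`, rooted at `u`, has type 2 (for the rooted `W₄` theorem). -/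
def TypeTwo (G : MG V) (u : V) : Prop :=
  ∃ W0 : Finset V, W0 ⊆ G.verts ∧ u ∉ W0 ∧ 1 ≤ W0.card ∧ W0.card ≤ 2 ∧
    ∃ w0 ∈ W0,
      ∃ n : ℕ, 3 ≤ n ∧
        ∃ f : Fin n → V,
          Function.Injective f ∧
          Finset.univ.image f = (mapGraph (collapseFun W0 w0) G).verts ∧
          (∃ i, f i = u) ∧ (∃ j, f j = w0) ∧
          ((s(u, w0) ∉ cycleEdges n f ∧
              (mapGraph (collapseFun W0 w0) G).edges =
                2 • cycleEdges n f + {s(u, w0)}) ∨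
           (∃ v : V, s(u, v) ∈ cycleEdges n f ∧ s(v, w0) ∈ cycleEdges n f ∧
              (mapGraph (collapseFun W0 w0) G).edges =
                2 • cycleEdges n f + {s(u, v), s(v, w0)}) ∨
           (s(u, w0) ∈ cycleEdges n f ∧
              (mapGraph (collapseFun W0 w0) G).edges =
                2 • cycleEdges n f + {s(u, w0)}))

lemma walkEdges_nil : walkEdges ([] : List V) = 0 := rfl

lemma walkEdges_single (a : V) : walkEdges [a] = 0 := rfl

lemma walkEdges_cons_cons (a b : V) (t : List V) :
    walkEdges (a :: b :: t) = s(a, b) ::ₘ walkEdges (b :: t) := rfl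

lemma walkEdges_append (A : List V) (x : V) (B : List V) :
    walkEdges (A ++ x :: B) = walkEdges (A ++ [x]) + walkEdges (x :: B) := by
  induction A with
  | nil => simp [walkEdges_single]
  | cons a A ih =>
    cases A with
    | nil => simp [walkEdges_cons_cons, walkEdges_single]
    | cons c A' =>
      simp only [List.cons_append, walkEdges_cons_cons] at *
      rw [ih, Multiset.cons_add]

lemma exists_split {u v : V} : ∀ l : List V, s(u, v) ∈ walkEdges l →
    ∃ (l1 : List V) (x y : V) (l2 : List V), l = l1 ++ x :: y :: l2 ∧ s(x, y) = s(u, v) ∧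
      s(u, v) ∉ walkEdges (l1 ++ [x])
  | [], h => absurd h (by simp [walkEdges_nil])
  | [a], h => absurd h (by simp [walkEdges_single])
  | a :: b :: t, h => by
    by_cases hab : s(a, b) = s(u, v)
    · exact ⟨[], a, b, t, rfl, hab, by simp [walkEdges_single]⟩
    · rw [walkEdges_cons_cons, Multiset.mem_cons] at h
      rcases h with h | h
      · exact absurd h.symm hab
      · obtain ⟨l1, x, y, l2, heq, hxy, hnot⟩ := exists_split (b :: t) h
        refine ⟨a :: l1, x, y, l2, by rw [List.cons_append, heq], hxy, ?_⟩
        obtain ⟨m, hm⟩ : ∃ m, l1 ++ [x] = b :: m := by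
          cases l1 with
          | nil =>
            injection heq with h1 h2
            exact ⟨[], by simp [h1]⟩
          | cons c l1' =>
            injection heq with h1 h2
            exact ⟨l1' ++ [x], by simp [h1]⟩
        have hthis : (a :: l1) ++ [x] = a :: b :: m := by rw [List.cons_append, hm]
        rw [hthis, walkEdges_cons_cons, Multiset.mem_cons, ← hm]
        push_neg
        exact ⟨fun hc => hab hc.symm, hnot⟩

lemma surgery {u v : V} (l : List V) (h2 : 2 ≤ Multiset.count s(u, v) (walkEdges l)) :
    ∃ l' : List V, walkEdges l' ≤ walkEdges l ∧
      Multiset.count s(u, v) (walkEdges l') < Multiset.count s(u, v) (walkEdges l) ∧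
      l'.head? = l.head? ∧ l'.getLast? = l.getLast? := by
  have hmem : s(u, v) ∈ walkEdges l := by
    rw [← Multiset.count_pos]; omega
  obtain ⟨l1, x, y, l2, rfl, hxy, hnot⟩ := exists_split l hmem
  have hdecomp : walkEdges (l1 ++ x :: y :: l2)
      = walkEdges (l1 ++ [x]) + (s(u, v) ::ₘ walkEdges (y :: l2)) := by
    rw [walkEdges_append, walkEdges_cons_cons, hxy]
  have hc1 : Multiset.count s(u, v) (walkEdges (l1 ++ [x])) = 0 :=
    Multiset.count_eq_zero.mpr hnot
  have hmem2 : s(u, v) ∈ walkEdges (y :: l2) := by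
    rw [← Multiset.count_pos]
    have h2' := h2
    rw [hdecomp, Multiset.count_add, Multiset.count_cons_self, hc1] at h2'
    omega
  obtain ⟨m1, p, q, m2, hm, hpq, -⟩ := exists_split (y :: l2) hmem2
  have hdecomp2 : walkEdges (y :: l2)
      = walkEdges (m1 ++ [p]) + (s(u, v) ::ₘ walkEdges (q :: m2)) := by
    rw [hm, walkEdges_append, walkEdges_cons_cons, hpq]
  have hlast : (l1 ++ x :: y :: l2).getLast? = (q :: m2).getLast? := by
    rw [List.getLast?_append_cons, List.getLast?_cons_cons, hm,
      List.getLast?_append_cons, List.getLast?_cons_cons]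
  by_cases hxq : x = q
  · subst hxq
    refine ⟨l1 ++ x :: m2, ?_, ?_, ?_, ?_⟩
    · rw [walkEdges_append, hdecomp, hdecomp2]
      refine add_le_add_right ?_ _
      refine le_trans ?_ (Multiset.le_cons_self _ _)
      exact le_trans (Multiset.le_cons_self _ _) (Multiset.le_add_left _ _)
    · rw [walkEdges_append, hdecomp, hdecomp2]
      simp only [Multiset.count_add, Multiset.count_cons_self, hc1]
      omega
    · cases l1 <;> simp
    · rw [hlast, List.getLast?_append_cons]
  · have hxuv : x = u ∨ x = v := by
      rcases Sym2.eq_iff.mp hxy with ⟨h, -⟩ | ⟨h, -⟩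
      · exact Or.inl h
      · exact Or.inr h
    have hquv : q = u ∨ q = v := by
      rcases Sym2.eq_iff.mp hpq with ⟨-, h⟩ | ⟨-, h⟩
      · exact Or.inr h
      · exact Or.inl h
    have hxquv : s(x, q) = s(u, v) := by
      rcases hxuv with h1 | h1 <;> rcases hquv with h2 | h2
      · exact absurd (h1.trans h2.symm) hxq
      · rw [h1, h2]
      · rw [h1, h2, Sym2.eq_swap]
      · exact absurd (h1.trans h2.symm) hxq
    refine ⟨l1 ++ x :: q :: m2, ?_, ?_, ?_, ?_⟩
    · rw [walkEdges_append, walkEdges_cons_cons, hxquv, hdecomp, hdecomp2]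
      refine add_le_add_right (Multiset.cons_le_cons _ ?_) _
      exact le_trans (Multiset.le_cons_self _ _) (Multiset.le_add_left _ _)
    · rw [walkEdges_append, walkEdges_cons_cons, hxquv, hdecomp, hdecomp2]
      simp only [Multiset.count_add, Multiset.count_cons_self, hc1]
      omega
    · cases l1 <;> simp
    · rw [hlast, List.getLast?_append_cons, List.getLast?_cons_cons]

lemma exists_two_of_card_lt {α : Type*} (P : Multiset α) (f : α → ℕ)
    (h : Multiset.card P < (P.map f).sum) : ∃ p ∈ P, 2 ≤ f p := by
  by_contra hcon
  push_neg at hcon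
  have hle : (P.map f).sum ≤ Multiset.card (P.map f) • 1 := by
    apply Multiset.sum_le_card_nsmul
    intro x hx
    obtain ⟨p, hp, rfl⟩ := Multiset.mem_map.mp hx
    have := hcon p hp
    omega
  rw [Multiset.card_map, smul_eq_mul, mul_one] at hle
  omega

lemma le_erase_of_count_lt {α : Type*} [DecidableEq α] {A B : Multiset α} {x : α}
    (hAB : A ≤ B) (hx : A.count x < B.count x) : A ≤ B.erase x := by
  rw [Multiset.le_iff_count] at hAB ⊢
  intro a
  by_cases hax : a = x
  · subst hax
    rw [Multiset.count_erase_self]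
    omega
  · rw [Multiset.count_erase_of_ne hax]
    exact hAB a

lemma reduce_walks {V W : Type} (G : MG V) (u v : V) (HE : Multiset (Sym2 W))
    (hmult : HE.card < emult G u v) (φ : W → V) :
    ∀ (n : ℕ) (P : Multiset (Sym2 W × List V)),
      Multiset.count s(u, v) ((P.map fun p => walkEdges p.2).sum) ≤ n →
      P.map Prod.fst = HE →
      (∀ p ∈ P, ∃ a b : W, p.1 = s(a, b) ∧ IsWalk p.2 (φ a) (φ b)) →
      (P.map fun p => walkEdges p.2).sum ≤ G.edges →
      ∃ P' : Multiset (Sym2 W × List V),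
        P'.map Prod.fst = HE ∧
        (∀ p ∈ P', ∃ a b : W, p.1 = s(a, b) ∧ IsWalk p.2 (φ a) (φ b)) ∧
        (P'.map fun p => walkEdges p.2).sum ≤ G.edges.erase s(u, v) := by
  simp only [emult] at hmult
  intro n
  induction n with
  | zero =>
    intro P hcnt hfst hwalk hle
    exact ⟨P, hfst, hwalk, le_erase_of_count_lt hle (by omega)⟩
  | succ n ih =>
    intro P hcnt hfst hwalk hle
    by_cases hsmall :
        Multiset.count s(u, v) ((P.map fun p => walkEdges p.2).sum)
          < Multiset.count s(u, v) G.edges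
    · exact ⟨P, hfst, hwalk, le_erase_of_count_lt hle hsmall⟩
    · push_neg at hsmall
      have hcard : Multiset.card P = HE.card := by rw [← hfst, Multiset.card_map]
      have hsum : Multiset.card P
          < (P.map fun p => Multiset.count s(u, v) (walkEdges p.2)).sum := by
        rw [← Multiset.count_sum]
        omega
      obtain ⟨p, hp, hp2⟩ := exists_two_of_card_lt P _ hsum
      obtain ⟨l', hle', hcnt', hhead', hlast'⟩ := surgery p.2 hp2
      set R := P.erase p with hR
      have hP : P = p ::ₘ R := (Multiset.cons_erase hp).symm
      refine ih ((p.1, l') ::ₘ R) ?_ ?_ ?_ ?_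
      · rw [hP] at hcnt
        simp only [Multiset.map_cons, Multiset.sum_cons, Multiset.count_add] at hcnt ⊢
        omega
      · rw [hP] at hfst
        simpa using hfst
      · intro q hq
        rcases Multiset.mem_cons.mp hq with rfl | hq'
        · obtain ⟨a, b, hab, hw⟩ := hwalk p hp
          exact ⟨a, b, hab, hhead'.trans hw.1, hlast'.trans hw.2⟩
        · exact hwalk q (Multiset.mem_of_mem_erase hq')
      · refine le_trans ?_ hle
        rw [hP]
        simp only [Multiset.map_cons, Multiset.sum_cons]
        exact add_le_add_left hle' _

/-- Let `G` and `H` be rooted graphs (with root tuples `r`, `s` of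
the same length) and let `u, v ∈ V(G)` satisfy `e_G(u, v) > |E(H)|`.  Then `G` has a
rooted immersion of `H` if and only if the graph obtained from `G` by deleting one
copy of the edge `uv` has a rooted immersion of `H`. -/
theorem statement_17 {V : Type} {W : Type} (G : MG V) (t : ℕ)
    (r : Fin t → V) (hrinj : Function.Injective r) (hrv : ∀ i, r i ∈ G.verts)
    (hGconn : Connected G)
    (HE : Multiset (Sym2 W)) (hHloopless : ∀ e ∈ HE, ¬ e.IsDiag)
    (s : Fin t → W) (hsinj : Function.Injective s)
    (u v : V) (hmult : HE.card < emult G u v) :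
    (∃ φ : W → V, ImmersionVia G HE φ ∧ ∀ i, φ (s i) = r i) ↔
      (∃ φ : W → V, ImmersionVia (deleteEdge G s(u, v)) HE φ ∧ ∀ i, φ (s i) = r i) := by
  constructor
  · rintro ⟨φ, ⟨hinj, hverts, P, hfst, hwalk, hle⟩, hroots⟩
    obtain ⟨P', hfst', hwalk', hle'⟩ :=
      reduce_walks G u v HE hmult φ _ P le_rfl hfst hwalk hle
    exact ⟨φ, ⟨hinj, hverts, P', hfst', hwalk', hle'⟩, hroots⟩
  · rintro ⟨φ, ⟨hinj, hverts, P, hfst, hwalk, hle⟩, hroots⟩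
    exact ⟨φ, ⟨hinj, hverts, P, hfst, hwalk,
      le_trans hle (Multiset.erase_le _ _)⟩, hroots⟩

end PaperW4
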